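/- (CLEM E-step: second latent expectation.) Let ν>0, σ²>0, r∈(0,1) and μ₁,μ₂∈ℝ. For all y₁,y₂∈ℝ, with y_i* = y_i − μ_i and v(u) = 1 + (1−r)u²/(νσ²), one has ∫₀^∞ ∫₀^∞ z₂ · f(y₁|z₁,μ₁) · f(y₂|z₂,μ₂) · g_{ν/2,r}(z₁,z₂) dz₁ dz₂ = (2(1−r)^{ν/2+2} Γ((ν+1)/2) Γ((ν+3)/2)/(π ν² σ² Γ(ν/2)²)) · ₂F₁((ν+1)/2, (ν+3)/2; ν/2; r/(v(y₁*)v(y₂*))) / (v(y₁*)^{(ν+1)/2} · v(y₂*)^{(ν+3)/2}). Dividing by the pairwise joint density f(y₁,y₂) gives the CLEM conditional expectation ζ₂ = E(Z_{t−i} | Y_t=y₁, Y_{t−i}=y₂). -/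

import Mathlib

/-!
Expanding the Bessel function, the Kibble density is a mixture, with weights
`t ^ k / (Γ(k + φ) k!)`, of products of gamma kernels `z₁ ^ (k + φ - 1) e^(-c z₁)` and
`z₂ ^ (k + φ - 1) e^(-c z₂)`, where `c = φ / (1 - r)` and `t = r c²`. The normal factors and `z₂`
only shift exponents and rates, the rates becoming `bᵢ = c + yᵢ*² / (2σ²) = c v(yᵢ*)`.
All terms are nonnegative, so the series may be integrated termwise once the series of integrals
converges. By Euler's integral, the inner integrals sum to a ₁F₁-series, which converges
everywhere, and the outer ones sum to a ₂F₁-series at `t / (b₁ b₂) = r / (v(y₁*) v(y₂*)) < 1`.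
-/

open MeasureTheory Real Set

/-- Modified Bessel function of the first kind (series form). -/
noncomputable def besselI (α x : ℝ) : ℝ :=
  ∑' k : ℕ, (x / 2) ^ (2 * (k : ℝ) + α) / (Real.Gamma ((k : ℝ) + α + 1) * (Nat.factorial k : ℝ))

/-- Gamma density with rate `γ` and shape `α`. -/
noncomputable def gammaPdf (γ α z : ℝ) : ℝ :=
  γ ^ α * z ^ (α - 1) * Real.exp (-γ * z) / Real.Gamma α

/-- Kibble bivariate gamma density with parameters `φ > 0` and `r ∈ (0,1)`. -/
noncomputable def kibble (φ r z₁ z₂ : ℝ) : ℝ :=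
  φ ^ (φ + 1) / ((1 - r) * Real.Gamma φ) * (z₁ * z₂ / r) ^ ((φ - 1) / 2) *
    Real.exp (-φ * (z₁ + z₂) / (1 - r)) *
    besselI (φ - 1) (2 * φ * Real.sqrt (r * z₁ * z₂) / (1 - r))

/-- Conditional normal density of the NSVt model given latent `z`: `N(μ, σ²/z)`. -/
noncomputable def normCond (σ μ y z : ℝ) : ℝ :=
  Real.sqrt z / (Real.sqrt (2 * Real.pi) * σ) * Real.exp (-z * (y - μ) ^ 2 / (2 * σ ^ 2))

/-- Student-t density with `ν` degrees of freedom, location `μ` and scale `σ`. -/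
noncomputable def studentTPdf (ν μ σ y : ℝ) : ℝ :=
  Real.Gamma ((ν + 1) / 2) / (Real.Gamma (ν / 2) * Real.sqrt (Real.pi * ν) * σ) *
    (1 + (y - μ) ^ 2 / (ν * σ ^ 2)) ^ (-(ν + 1) / 2)

/-- Gauss hypergeometric series `₂F₁(a₁,a₂;b;x)`. -/
noncomputable def hyp2F1 (a₁ a₂ b x : ℝ) : ℝ :=
  ∑' k : ℕ, Real.Gamma ((k : ℝ) + a₁) * Real.Gamma ((k : ℝ) + a₂) * Real.Gamma b /
    (Real.Gamma a₁ * Real.Gamma a₂ * Real.Gamma ((k : ℝ) + b)) * x ^ k / (Nat.factorial k : ℝ)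

/-- Confluent hypergeometric (Kummer) series `₁F₁(a;b;x)`. -/
noncomputable def hyp1F1 (a b x : ℝ) : ℝ :=
  ∑' k : ℕ, Real.Gamma ((k : ℝ) + a) * Real.Gamma b /
    (Real.Gamma a * Real.Gamma ((k : ℝ) + b)) * x ^ k / (Nat.factorial k : ℝ)

/-- Generalized Laguerre polynomial of degree `n` with parameter `α`. -/
noncomputable def laguerreL (n : ℕ) (α x : ℝ) : ℝ :=
  ∑ i ∈ Finset.range (n + 1),
    (-1 : ℝ) ^ i * Real.Gamma ((n : ℝ) + α + 1) /
      (Real.Gamma (α + (i : ℝ) + 1) * (Nat.factorial (n - i) : ℝ) * (Nat.factorial i : ℝ)) * x ^ i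

/-- Negative binomial pmf with parameters `φ > 0` and `r ∈ (0,1)`. -/
noncomputable def nbinomPmf (φ r : ℝ) (u : ℕ) : ℝ :=
  Real.Gamma (φ + u) / (Real.Gamma φ * (Nat.factorial u : ℝ)) * (1 - r) ^ φ * r ^ u

/-- The quantity `ω(y₁,y₂)` appearing in the pairwise joint density of the NSVt model. -/
noncomputable def omegaFn (ν σ r μ₁ μ₂ y₁ y₂ : ℝ) : ℝ :=
  ((1 + (1 - r) * (y₁ - μ₁) ^ 2 / (ν * σ ^ 2)) *
    (1 + (1 - r) * (y₂ - μ₂) ^ 2 / (ν * σ ^ 2)))⁻¹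

/-- Pairwise joint density of the NSVt model (with `r = ρʲ`). -/
noncomputable def pairDensity (ν σ r μ₁ μ₂ y₁ y₂ : ℝ) : ℝ :=
  (1 - r) ^ (ν / 2 + 1) / (Real.pi * ν * σ ^ 2) *
    (Real.Gamma ((ν + 1) / 2) / Real.Gamma (ν / 2)) ^ 2 *
    omegaFn ν σ r μ₁ μ₂ y₁ y₂ ^ ((ν + 1) / 2) *
    hyp2F1 ((ν + 1) / 2) ((ν + 1) / 2) (ν / 2) (r * omegaFn ν σ r μ₁ μ₂ y₁ y₂)

open Filter Topology

noncomputable def hyp2F1Term (a₁ a₂ b x : ℝ) (k : ℕ) : ℝ :=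
  Gamma ((k : ℝ) + a₁) * Gamma ((k : ℝ) + a₂) * Gamma b /
    (Gamma a₁ * Gamma a₂ * Gamma ((k : ℝ) + b)) * x ^ k / (k.factorial : ℝ)

noncomputable def hyp1F1Term (a b x : ℝ) (k : ℕ) : ℝ :=
  Gamma ((k : ℝ) + a) * Gamma b / (Gamma a * Gamma ((k : ℝ) + b)) * x ^ k / (k.factorial : ℝ)

theorem hyp2F1_eq_tsum (a₁ a₂ b x : ℝ) : hyp2F1 a₁ a₂ b x = ∑' k, hyp2F1Term a₁ a₂ b x k := rfl

lemma Gamma_natCast_succ_add {a : ℝ} (ha : 0 < a) (k : ℕ) :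
    Gamma (((k + 1 : ℕ) : ℝ) + a) = ((k : ℝ) + a) * Gamma ((k : ℝ) + a) := by
  rw [Nat.cast_succ, add_right_comm, Gamma_add_one (by positivity)]

lemma tendsto_natCast_add_div_natCast_add (a b : ℝ) :
    Tendsto (fun k : ℕ => ((k : ℝ) + a) / ((k : ℝ) + b)) atTop (𝓝 1) := by
  simpa [add_comm] using tendsto_add_mul_div_add_mul_atTop_nhds a b (1 : ℝ) one_ne_zero

lemma summable_of_pos_of_succ_eq_mul {f ρ : ℕ → ℝ} {l : ℝ} (hl : l < 1) (hf : ∀ k, 0 < f k)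
    (hρ : ∀ k, f (k + 1) = ρ k * f k) (hlim : Tendsto ρ atTop (𝓝 l)) : Summable f := by
  refine summable_of_ratio_test_tendsto_lt_one hl (.of_forall fun k => (hf k).ne') ?_
  refine hlim.congr fun k => ?_
  rw [Real.norm_of_nonneg (hf _).le, Real.norm_of_nonneg (hf _).le, hρ,
    mul_div_cancel_right₀ _ (hf k).ne']

section
variable {a a₁ a₂ b x : ℝ}

lemma hyp2F1Term_pos (ha₁ : 0 < a₁) (ha₂ : 0 < a₂) (hb : 0 < b) (hx : 0 < x) (k : ℕ) :
    0 < hyp2F1Term a₁ a₂ b x k := by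
  unfold hyp2F1Term; positivity

lemma hyp2F1Term_succ (ha₁ : 0 < a₁) (ha₂ : 0 < a₂) (hb : 0 < b) (k : ℕ) :
    hyp2F1Term a₁ a₂ b x (k + 1) =
      ((k + a₁) / (k + b) * ((k + a₂) / (k + 1)) * x) * hyp2F1Term a₁ a₂ b x k := by
  unfold hyp2F1Term
  rw [Gamma_natCast_succ_add ha₁, Gamma_natCast_succ_add ha₂, Gamma_natCast_succ_add hb,
    Nat.factorial_succ, pow_succ]
  have : 0 < Gamma ((k : ℝ) + b) := by positivity
  field_simp
  push_cast
  ring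

theorem summable_hyp2F1Term (ha₁ : 0 < a₁) (ha₂ : 0 < a₂) (hb : 0 < b) (hx₀ : 0 < x)
    (hx₁ : x < 1) : Summable (hyp2F1Term a₁ a₂ b x) := by
  refine summable_of_pos_of_succ_eq_mul hx₁ (hyp2F1Term_pos ha₁ ha₂ hb hx₀)
    (hyp2F1Term_succ ha₁ ha₂ hb) ?_
  simpa using ((tendsto_natCast_add_div_natCast_add a₁ b).mul
    (tendsto_natCast_add_div_natCast_add a₂ 1)).mul_const x

lemma hyp1F1Term_pos (ha : 0 < a) (hb : 0 < b) (hx : 0 < x) (k : ℕ) :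
    0 < hyp1F1Term a b x k := by
  unfold hyp1F1Term; positivity

lemma hyp1F1Term_succ (ha : 0 < a) (hb : 0 < b) (k : ℕ) :
    hyp1F1Term a b x (k + 1) = ((k + a) / (k + b) * (1 / (k + 1)) * x) * hyp1F1Term a b x k := by
  unfold hyp1F1Term
  rw [Gamma_natCast_succ_add ha, Gamma_natCast_succ_add hb, Nat.factorial_succ, pow_succ]
  have : 0 < Gamma ((k : ℝ) + b) := by positivity
  field_simp
  push_cast
  ring

theorem summable_hyp1F1Term (ha : 0 < a) (hb : 0 < b) (hx : 0 < x) :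
    Summable (hyp1F1Term a b x) := by
  refine summable_of_pos_of_succ_eq_mul zero_lt_one (hyp1F1Term_pos ha hb hx)
    (hyp1F1Term_succ ha hb) ?_
  simpa using ((tendsto_natCast_add_div_natCast_add a b).mul
    tendsto_one_div_add_atTop_nhds_zero_nat).mul_const x

end

noncomputable def gammaKernel (p b z : ℝ) : ℝ := z ^ p * exp (-(b * z))

section
variable {p q b b₁ b₂ z : ℝ}

lemma gammaKernel_nonneg (hz : 0 ≤ z) : 0 ≤ gammaKernel p b z := by
  unfold gammaKernel; positivity

lemma gammaKernel_mul_gammaKernel (hz : 0 < z) :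
    gammaKernel p b z * gammaKernel q b₁ z = gammaKernel (p + q) (b + b₁) z := by
  simp only [gammaKernel, rpow_add hz, add_mul, neg_add, exp_add]
  ring

lemma integrableOn_gammaKernel (hp : -1 < p) (hb : 0 < b) :
    IntegrableOn (gammaKernel p b) (Ioi 0) := by
  have := integrableOn_rpow_mul_exp_neg_mul_rpow hp zero_lt_one hb
  simp only [rpow_one, neg_mul] at this
  exact this

lemma integral_gammaKernel (hp : -1 < p) (hb : 0 < b) :
    ∫ z in Ioi 0, gammaKernel p b z = Gamma (p + 1) / b ^ (p + 1) := by
  have := integral_rpow_mul_exp_neg_mul_Ioi (a := p + 1) (by linarith) hb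
  simp only [add_sub_cancel_right] at this
  rw [div_eq_inv_mul, ← inv_rpow hb.le, ← one_div, ← this]
  rfl

end

theorem integral_tsum_of_nonneg {α : Type*} [MeasurableSpace α] {μ : Measure α}
    {f : ℕ → α → ℝ} (hf : ∀ k, Integrable (f k) μ) (hf₀ : ∀ k, 0 ≤ᵐ[μ] f k)
    (hs : Summable fun k => ∫ a, f k a ∂μ) :
    ∫ a, ∑' k, f k a ∂μ = ∑' k, ∫ a, f k a ∂μ := by
  refine (integral_tsum_of_summable_integral_norm hf (hs.congr fun k => ?_)).symm
  exact integral_congr_ae ((hf₀ k).mono fun a ha => (Real.norm_of_nonneg ha).symm)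

theorem integral_Ioi_tsum_mul_gammaKernel {c : ℕ → ℝ} (hc : ∀ k, 0 ≤ c k) {p b : ℝ}
    (hp : -1 < p) (hb : 0 < b)
    (hs : Summable fun k : ℕ => c k * (Gamma ((k : ℝ) + p + 1) / b ^ ((k : ℝ) + p + 1))) :
    ∫ z in Ioi 0, ∑' k : ℕ, c k * gammaKernel ((k : ℝ) + p) b z
      = ∑' k : ℕ, c k * (Gamma ((k : ℝ) + p + 1) / b ^ ((k : ℝ) + p + 1)) := by
  have hpk (k : ℕ) : -1 < (k : ℝ) + p := by linarith [k.cast_nonneg (α := ℝ)]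
  have hint (k : ℕ) : ∫ z in Ioi 0, c k * gammaKernel ((k : ℝ) + p) b z
      = c k * (Gamma ((k : ℝ) + p + 1) / b ^ ((k : ℝ) + p + 1)) := by
    rw [integral_const_mul, integral_gammaKernel (hpk k) hb]
  rw [integral_tsum_of_nonneg (fun k => (integrableOn_gammaKernel (hpk k) hb).const_mul _)
    (fun k => (ae_restrict_iff' measurableSet_Ioi).2 (.of_forall fun z hz =>
      mul_nonneg (hc k) (gammaKernel_nonneg (le_of_lt hz))))
    (by simpa only [hint] using hs)]
  exact tsum_congr hint

theorem integral_Ioi_integral_Ioi_tsum_mul_gammaKernel {c : ℕ → ℝ} (hc : ∀ k, 0 ≤ c k)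
    {p q b₁ b₂ : ℝ} (hp : -1 < p) (hq : -1 < q) (hb₁ : 0 < b₁) (hb₂ : 0 < b₂)
    (hs₁ : ∀ z > 0, Summable fun k : ℕ =>
      c k * (Gamma ((k : ℝ) + p + 1) / b₁ ^ ((k : ℝ) + p + 1)) * z ^ k)
    (hs₂ : Summable fun k : ℕ => c k * (Gamma ((k : ℝ) + p + 1) / b₁ ^ ((k : ℝ) + p + 1)) *
      (Gamma ((k : ℝ) + q + 1) / b₂ ^ ((k : ℝ) + q + 1))) :
    ∫ z₂ in Ioi 0, ∫ z₁ in Ioi 0,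
        ∑' k : ℕ, c k * gammaKernel ((k : ℝ) + p) b₁ z₁ * gammaKernel ((k : ℝ) + q) b₂ z₂
      = ∑' k : ℕ, c k * (Gamma ((k : ℝ) + p + 1) / b₁ ^ ((k : ℝ) + p + 1)) *
          (Gamma ((k : ℝ) + q + 1) / b₂ ^ ((k : ℝ) + q + 1)) := by
  set I₁ : ℕ → ℝ := fun k => Gamma ((k : ℝ) + p + 1) / b₁ ^ ((k : ℝ) + p + 1)
  have hI₁ (k : ℕ) : 0 ≤ I₁ k :=
    (div_pos (Gamma_pos_of_pos (by linarith [k.cast_nonneg (α := ℝ)])) (rpow_pos_of_pos hb₁ _)).le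
  have hinner : ∀ z₂ ∈ Ioi (0 : ℝ), ∫ z₁ in Ioi 0,
      ∑' k : ℕ, c k * gammaKernel ((k : ℝ) + p) b₁ z₁ * gammaKernel ((k : ℝ) + q) b₂ z₂
        = ∑' k : ℕ, c k * I₁ k * gammaKernel ((k : ℝ) + q) b₂ z₂ := by
    intro z₂ hz₂
    have hsplit (k : ℕ) : gammaKernel ((k : ℝ) + q) b₂ z₂ = z₂ ^ k * gammaKernel q b₂ z₂ := by
      rw [gammaKernel, gammaKernel, rpow_add hz₂, rpow_natCast, mul_assoc]
    simp_rw [mul_right_comm (c _) (gammaKernel _ b₁ _)]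
    rw [integral_Ioi_tsum_mul_gammaKernel
      (fun k => mul_nonneg (hc k) (gammaKernel_nonneg (le_of_lt hz₂))) hp hb₁]
    · exact tsum_congr fun k => by ring
    · refine ((hs₁ z₂ hz₂).mul_right (gammaKernel q b₂ z₂)).congr fun k => ?_
      rw [hsplit]
      ring
  rw [setIntegral_congr_fun measurableSet_Ioi hinner,
    integral_Ioi_tsum_mul_gammaKernel (fun k => mul_nonneg (hc k) (hI₁ k)) hq hb₂ hs₂]

section
variable {β p q b₁ b₂ t : ℝ}

lemma besselTerm_integral_eq_hyp1F1Term (hp : -1 < p) (hβ : 0 < β) (hb₁ : 0 < b₁) (z : ℝ)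
    (k : ℕ) :
    t ^ k / (Gamma ((k : ℝ) + β) * k.factorial) *
        (Gamma ((k : ℝ) + p + 1) / b₁ ^ ((k : ℝ) + p + 1)) * z ^ k
      = Gamma (p + 1) / (Gamma β * b₁ ^ (p + 1)) * hyp1F1Term (p + 1) β (t * z / b₁) k := by
  have : 0 < Gamma (p + 1) := Gamma_pos_of_pos (by linarith)
  unfold hyp1F1Term
  rw [add_assoc (k : ℝ) p 1, rpow_add hb₁, rpow_natCast, div_pow, mul_pow]
  field_simp

lemma besselTerm_integral_integral_eq_hyp2F1Term (hp : -1 < p) (hq : -1 < q)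
    (hβ : 0 < β) (hb₁ : 0 < b₁) (hb₂ : 0 < b₂) (k : ℕ) :
    t ^ k / (Gamma ((k : ℝ) + β) * k.factorial) *
        (Gamma ((k : ℝ) + p + 1) / b₁ ^ ((k : ℝ) + p + 1)) *
        (Gamma ((k : ℝ) + q + 1) / b₂ ^ ((k : ℝ) + q + 1))
      = Gamma (p + 1) * Gamma (q + 1) / (Gamma β * b₁ ^ (p + 1) * b₂ ^ (q + 1)) *
          hyp2F1Term (p + 1) (q + 1) β (t / (b₁ * b₂)) k := by
  have : 0 < Gamma (p + 1) := Gamma_pos_of_pos (by linarith)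
  have : 0 < Gamma (q + 1) := Gamma_pos_of_pos (by linarith)
  unfold hyp2F1Term
  rw [add_assoc (k : ℝ) p 1, add_assoc (k : ℝ) q 1, rpow_add hb₁, rpow_add hb₂, rpow_natCast,
    rpow_natCast, div_pow, mul_pow]
  field_simp

theorem integral_Ioi_integral_Ioi_tsum_gammaKernel_eq_hyp2F1 (hβ : 0 < β) (hp : -1 < p)
    (hq : -1 < q) (hb₁ : 0 < b₁) (hb₂ : 0 < b₂) (ht₀ : 0 < t) (ht : t < b₁ * b₂) :
    ∫ z₂ in Ioi 0, ∫ z₁ in Ioi 0, ∑' k : ℕ, t ^ k / (Gamma ((k : ℝ) + β) * k.factorial) *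
        gammaKernel ((k : ℝ) + p) b₁ z₁ * gammaKernel ((k : ℝ) + q) b₂ z₂
      = Gamma (p + 1) * Gamma (q + 1) / (Gamma β * b₁ ^ (p + 1) * b₂ ^ (q + 1)) *
          hyp2F1 (p + 1) (q + 1) β (t / (b₁ * b₂)) := by
  have hp₁ : 0 < p + 1 := by linarith
  have hq₁ : 0 < q + 1 := by linarith
  have hx : t / (b₁ * b₂) < 1 := (div_lt_one (by positivity)).2 ht
  have hs₁ (z : ℝ) (hz : 0 < z) :=
    ((summable_hyp1F1Term hp₁ hβ (by positivity : 0 < t * z / b₁)).mul_left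
      (Gamma (p + 1) / (Gamma β * b₁ ^ (p + 1)))).congr fun k =>
        (besselTerm_integral_eq_hyp1F1Term hp hβ hb₁ z k).symm
  have hs₂ :=
    ((summable_hyp2F1Term hp₁ hq₁ hβ (by positivity) hx).mul_left
      (Gamma (p + 1) * Gamma (q + 1) / (Gamma β * b₁ ^ (p + 1) * b₂ ^ (q + 1)))).congr fun k =>
        (besselTerm_integral_integral_eq_hyp2F1Term (t := t) hp hq hβ hb₁ hb₂ k).symm
  rw [integral_Ioi_integral_Ioi_tsum_mul_gammaKernel (fun k => by positivity) hp hq hb₁ hb₂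
    hs₁ hs₂, hyp2F1_eq_tsum, ← tsum_mul_left]
  exact tsum_congr (besselTerm_integral_integral_eq_hyp2F1Term hp hq hβ hb₁ hb₂)

end

lemma mul_gammaKernel {p b z : ℝ} (hz : 0 < z) :
    z * gammaKernel p b z = gammaKernel (p + 1) b z := by
  rw [gammaKernel, gammaKernel, rpow_add_one hz.ne']
  ring

lemma normCond_eq_gammaKernel (σ μ y z : ℝ) :
    normCond σ μ y z = gammaKernel (1 / 2) ((y - μ) ^ 2 / (2 * σ ^ 2)) z / (√(2 * π) * σ) := by
  rw [normCond, gammaKernel, sqrt_eq_rpow]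
  ring_nf

theorem kibble_eq_tsum {φ r z₁ z₂ : ℝ} (hφ : 0 < φ) (hr₀ : 0 < r) (hr₁ : r < 1) (hz₁ : 0 < z₁)
    (hz₂ : 0 < z₂) :
    kibble φ r z₁ z₂ = φ ^ (φ + 1) / ((1 - r) * Gamma φ) * (φ / (1 - r)) ^ (φ - 1) *
      ∑' k : ℕ, (r * (φ / (1 - r)) ^ 2) ^ k / (Gamma ((k : ℝ) + φ) * k.factorial) *
        gammaKernel ((k : ℝ) + (φ - 1)) (φ / (1 - r)) z₁ *
        gammaKernel ((k : ℝ) + (φ - 1)) (φ / (1 - r)) z₂ := by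
  have hr : 0 < 1 - r := by linarith
  rw [kibble, besselI, ← tsum_mul_left, ← tsum_mul_left]
  refine tsum_congr fun k => ?_
  rw [show (k : ℝ) + (φ - 1) + 1 = k + φ by ring]
  -- every factor is positive, so it suffices to compare logarithms
  refine log_injOn_pos (mem_Ioi.2 (by positivity))
    (mem_Ioi.2 (by unfold gammaKernel; positivity)) ?_
  simp (disch := positivity) only [gammaKernel, log_mul, log_div, log_rpow, log_pow, log_exp,
    log_sqrt]
  ring

theorem mul_normCond_mul_kibble_eq_tsum {φ r σ μ₁ μ₂ y₁ y₂ z₁ z₂ : ℝ} (hφ : 0 < φ) (hr₀ : 0 < r)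
    (hr₁ : r < 1) (hz₁ : 0 < z₁) (hz₂ : 0 < z₂) :
    z₂ * normCond σ μ₁ y₁ z₁ * normCond σ μ₂ y₂ z₂ * kibble φ r z₁ z₂
      = φ ^ (φ + 1) / ((1 - r) * Gamma φ) * (φ / (1 - r)) ^ (φ - 1) / (√(2 * π) * σ) ^ 2 *
        ∑' k : ℕ, (r * (φ / (1 - r)) ^ 2) ^ k / (Gamma ((k : ℝ) + φ) * k.factorial) *
          gammaKernel ((k : ℝ) + (φ - 1 / 2)) (φ / (1 - r) + (y₁ - μ₁) ^ 2 / (2 * σ ^ 2)) z₁ *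
          gammaKernel ((k : ℝ) + (φ + 1 / 2)) (φ / (1 - r) + (y₂ - μ₂) ^ 2 / (2 * σ ^ 2)) z₂ := by
  rw [kibble_eq_tsum hφ hr₀ hr₁ hz₁ hz₂, normCond_eq_gammaKernel, normCond_eq_gammaKernel]
  simp only [← tsum_mul_left]
  refine tsum_congr fun k => ?_
  rw [show (k : ℝ) + (φ - 1 / 2) = k + (φ - 1) + 1 / 2 by ring,
    show (k : ℝ) + (φ + 1 / 2) = k + (φ - 1) + 1 / 2 + 1 by ring, ← mul_gammaKernel hz₂,
    ← gammaKernel_mul_gammaKernel hz₁, ← gammaKernel_mul_gammaKernel hz₂]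
  ring

theorem integral_Ioi_integral_Ioi_mul_normCond_mul_kibble {φ r σ μ₁ μ₂ y₁ y₂ : ℝ} (hφ : 0 < φ)
    (hr₀ : 0 < r) (hr₁ : r < 1) :
    ∫ z₂ in Ioi 0, ∫ z₁ in Ioi 0,
        z₂ * normCond σ μ₁ y₁ z₁ * normCond σ μ₂ y₂ z₂ * kibble φ r z₁ z₂
      = φ ^ (φ + 1) / ((1 - r) * Gamma φ) * (φ / (1 - r)) ^ (φ - 1) / (√(2 * π) * σ) ^ 2 *
        (Gamma (φ + 1 / 2) * Gamma (φ + 3 / 2) /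
          (Gamma φ * (φ / (1 - r) + (y₁ - μ₁) ^ 2 / (2 * σ ^ 2)) ^ (φ + 1 / 2) *
            (φ / (1 - r) + (y₂ - μ₂) ^ 2 / (2 * σ ^ 2)) ^ (φ + 3 / 2)) *
        hyp2F1 (φ + 1 / 2) (φ + 3 / 2) φ (r * (φ / (1 - r)) ^ 2 /
          ((φ / (1 - r) + (y₁ - μ₁) ^ 2 / (2 * σ ^ 2)) *
            (φ / (1 - r) + (y₂ - μ₂) ^ 2 / (2 * σ ^ 2))))) := by
  have hc : 0 < φ / (1 - r) := div_pos hφ (by linarith)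
  have hb₁ : φ / (1 - r) ≤ φ / (1 - r) + (y₁ - μ₁) ^ 2 / (2 * σ ^ 2) :=
    le_add_of_nonneg_right (by positivity)
  have hb₂ : φ / (1 - r) ≤ φ / (1 - r) + (y₂ - μ₂) ^ 2 / (2 * σ ^ 2) :=
    le_add_of_nonneg_right (by positivity)
  have ht : r * (φ / (1 - r)) ^ 2 < (φ / (1 - r) + (y₁ - μ₁) ^ 2 / (2 * σ ^ 2)) *
      (φ / (1 - r) + (y₂ - μ₂) ^ 2 / (2 * σ ^ 2)) :=
    calc r * (φ / (1 - r)) ^ 2 < 1 * (φ / (1 - r)) ^ 2 := by gcongr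
      _ ≤ _ := by rw [one_mul, sq]; exact mul_le_mul hb₁ hb₂ hc.le (hc.trans_le hb₁).le
  rw [setIntegral_congr_fun measurableSet_Ioi fun z₂ hz₂ =>
      setIntegral_congr_fun measurableSet_Ioi fun z₁ hz₁ =>
        mul_normCond_mul_kibble_eq_tsum hφ hr₀ hr₁ hz₁ hz₂]
  simp only [integral_const_mul]
  rw [integral_Ioi_integral_Ioi_tsum_gammaKernel_eq_hyp2F1 hφ (by linarith) (by linarith)
    (hc.trans_le hb₁) (hc.trans_le hb₂) (by positivity) ht,
    show φ - 1 / 2 + 1 = φ + 1 / 2 by ring, show φ + 1 / 2 + 1 = φ + 3 / 2 by ring]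

/-- CLEM E-step, second latent expectation (numerator of `ζ₂`). -/
theorem clem_zeta2 (ν σ r μ₁ μ₂ : ℝ) (hν : 0 < ν) (hσ : 0 < σ)
    (hr : r ∈ Set.Ioo (0 : ℝ) 1) (y₁ y₂ : ℝ) :
    (∫ z₂ in Set.Ioi (0 : ℝ), ∫ z₁ in Set.Ioi (0 : ℝ),
        z₂ * normCond σ μ₁ y₁ z₁ * normCond σ μ₂ y₂ z₂ * kibble (ν / 2) r z₁ z₂)
      = 2 * (1 - r) ^ (ν / 2 + 2) * Real.Gamma ((ν + 1) / 2) * Real.Gamma ((ν + 3) / 2) /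
          (Real.pi * ν ^ 2 * σ ^ 2 * Real.Gamma (ν / 2) ^ 2) *
          hyp2F1 ((ν + 1) / 2) ((ν + 3) / 2) (ν / 2)
            (r / ((1 + (1 - r) * (y₁ - μ₁) ^ 2 / (ν * σ ^ 2)) *
              (1 + (1 - r) * (y₂ - μ₂) ^ 2 / (ν * σ ^ 2)))) /
          ((1 + (1 - r) * (y₁ - μ₁) ^ 2 / (ν * σ ^ 2)) ^ ((ν + 1) / 2) *
            (1 + (1 - r) * (y₂ - μ₂) ^ 2 / (ν * σ ^ 2)) ^ ((ν + 3) / 2)) := by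
  obtain ⟨hr₀, hr₁⟩ := hr
  have hr : 0 < 1 - r := by linarith
  set v₁ := 1 + (1 - r) * (y₁ - μ₁) ^ 2 / (ν * σ ^ 2)
  set v₂ := 1 + (1 - r) * (y₂ - μ₂) ^ 2 / (ν * σ ^ 2)
  set c := ν / 2 / (1 - r)
  have hc : 0 < c := by positivity
  have hb₁ : c + (y₁ - μ₁) ^ 2 / (2 * σ ^ 2) = c * v₁ := by simp only [c, v₁]; field_simp
  have hb₂ : c + (y₂ - μ₂) ^ 2 / (2 * σ ^ 2) = c * v₂ := by simp only [c, v₂]; field_simp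
  have hconst : (ν / 2) ^ (ν / 2 + 1) / ((1 - r) * Gamma (ν / 2)) * c ^ (ν / 2 - 1) /
        (√(2 * π) * σ) ^ 2 * (Gamma ((ν + 1) / 2) * Gamma ((ν + 3) / 2) /
          (Gamma (ν / 2) * c ^ ((ν + 1) / 2) * c ^ ((ν + 3) / 2)))
      = 2 * (1 - r) ^ (ν / 2 + 2) * Gamma ((ν + 1) / 2) * Gamma ((ν + 3) / 2) /
          (π * ν ^ 2 * σ ^ 2 * Gamma (ν / 2) ^ 2) := by
    refine log_injOn_pos (mem_Ioi.2 (by positivity)) (mem_Ioi.2 (by positivity)) ?_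
    simp (disch := positivity) only [c, log_mul, log_div, log_rpow, log_pow, log_sqrt]
    ring
  rw [integral_Ioi_integral_Ioi_mul_normCond_mul_kibble (by positivity) hr₀ hr₁, hb₁, hb₂,
    show r * c ^ 2 / (c * v₁ * (c * v₂)) = r / (v₁ * v₂) by field_simp,
    mul_rpow (by positivity) (by positivity), mul_rpow (by positivity) (by positivity),
    show ν / 2 + 1 / 2 = (ν + 1) / 2 by ring, show ν / 2 + 3 / 2 = (ν + 3) / 2 by ring, ← hconst]
  ring
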